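/- arXiv:0801.4847 — 4 statements merged into one kernel-verified Lean document; each statement's English description precedes it below -/
import Mathlib

section
/- Let V be a 2n-dimensional vector space with basis x_1,y_1,...,x_n,y_n over a field k of characteristic zero, and ω = Σ x_i∧y_i. Then the element y_1∧y_2∧...∧y_n ∈ Λ^n V does not lie in the subspace x_1∧Λ^{n-1}V + ω∧Λ^{n-2}V. -/
/-!
Let `f : V → V` be the projection killing every `xᵢ` and fixing every `yᵢ`. The induced algebra
endomorphism of `Λ V` kills `x₁ ∧ η` and `ω ∧ β`, since every term of `ω` contains some `xᵢ`,
while it fixes `y₁ ∧ ⋯ ∧ yₙ`, which is nonzero because the `yᵢ` are linearly independent.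
-/

open ExteriorAlgebra

namespace ExteriorAlgebra

theorem ιMulti_ne_zero_of_linearIndependent {K E : Type*} [Field K] [AddCommGroup E]
    [Module K E] {n : ℕ} {v : Fin n → E} (hv : LinearIndependent K v) :
    ιMulti K n v ≠ 0 := by
  have := (exteriorPower.ιMulti_family_linearIndependent_field (n := n) hv).ne_zero
    (Set.powersetCard.ofFinEmbEquiv (OrderIso.refl (Fin n)).toOrderEmbedding)
  simpa [exteriorPower.ιMulti_family, ← Subtype.coe_ne_coe] using this

variable {R M N : Type*} [CommRing R] [AddCommGroup M] [Module R M] [AddCommGroup N]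
  [Module R N]

theorem map_ι_mul_of_map_eq_zero {f : M →ₗ[R] N} {v : M} (hv : f v = 0)
    (a : ExteriorAlgebra R M) : map f (ι R v * a) = 0 := by
  rw [map_mul, map_apply_ι, hv, map_zero, zero_mul]

theorem map_sum_ι_mul_ι_mul_of_map_eq_zero {κ : Type*} (s : Finset κ) {f : M →ₗ[R] N}
    {x : κ → M} (hx : ∀ i, f (x i) = 0) (y : κ → M) (a : ExteriorAlgebra R M) :
    map f ((∑ i ∈ s, ι R (x i) * ι R (y i)) * a) = 0 := by
  simp only [Finset.sum_mul, mul_assoc, map_sum, map_ι_mul_of_map_eq_zero (hx _),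
    Finset.sum_const_zero]

end ExteriorAlgebra

theorem stmt_2_general {k V : Type*} [Field k] [AddCommGroup V] [Module k V]
    {n : ℕ} (hn : 0 < n) (b : Module.Basis (Fin n ⊕ Fin n) k V)
    (x y : Fin n → V)
    (hx : ∀ i, x i = b (Sum.inl i)) (hy : ∀ i, y i = b (Sum.inr i))
    (ω : ExteriorAlgebra k V)
    (hω : ω = ∑ i : Fin n, ι k (x i) * ι k (y i)) :
    ¬ ∃ η ∈ (LinearMap.range (ι k : V →ₗ[k] ExteriorAlgebra k V) ^ (n - 1) :
          Submodule k (ExteriorAlgebra k V)),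
        ∃ β ∈ (LinearMap.range (ι k : V →ₗ[k] ExteriorAlgebra k V) ^ (n - 2) :
          Submodule k (ExteriorAlgebra k V)),
        (List.ofFn fun i : Fin n => ι k (y i)).prod = ι k (x ⟨0, hn⟩) * η + ω * β := by
  rintro ⟨η, -, β, -, hprod⟩
  obtain ⟨f, hfx, hfy⟩ : ∃ f : V →ₗ[k] V, (∀ i, f (x i) = 0) ∧ ∀ i, f (y i) = y i :=
    ⟨b.constr k (Sum.elim 0 (b ∘ Sum.inr)), by simp [hx], by simp [hy]⟩
  have hy_indep : LinearIndependent k y := by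
    rw [show y = b ∘ Sum.inr from funext hy]
    exact b.linearIndependent.comp _ Sum.inr_injective
  apply ιMulti_ne_zero_of_linearIndependent hy_indep
  calc ιMulti k n y = map f (ιMulti k n y) := by
        rw [map_apply_ιMulti, show ⇑f ∘ y = y from funext hfy]
    _ = map f (ι k (x ⟨0, hn⟩) * η + ω * β) := by rw [ιMulti_apply, hprod]
    _ = 0 := by
        rw [map_add, map_ι_mul_of_map_eq_zero (hfx _), hω,
          map_sum_ι_mul_ι_mul_of_map_eq_zero _ hfx, add_zero]

/-- `y₁ ∧ … ∧ yₙ ∈ Λⁿ V` does not lie in `x₁ ∧ Λ^{n-1} V + ω ∧ Λ^{n-2} V`,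
where `ω = Σ xᵢ ∧ yᵢ`. -/
theorem stmt_2 {k V : Type*} [Field k] [CharZero k] [AddCommGroup V] [Module k V]
    {n : ℕ} (hn : 0 < n) (b : Module.Basis (Fin n ⊕ Fin n) k V)
    (x y : Fin n → V)
    (hx : ∀ i, x i = b (Sum.inl i)) (hy : ∀ i, y i = b (Sum.inr i))
    (ω : ExteriorAlgebra k V)
    (hω : ω = ∑ i : Fin n, ι k (x i) * ι k (y i)) :
    ¬ ∃ η ∈ (LinearMap.range (ι k : V →ₗ[k] ExteriorAlgebra k V) ^ (n - 1) :
          Submodule k (ExteriorAlgebra k V)),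
        ∃ β ∈ (LinearMap.range (ι k : V →ₗ[k] ExteriorAlgebra k V) ^ (n - 2) :
          Submodule k (ExteriorAlgebra k V)),
        (List.ofFn fun i : Fin n => ι k (y i)).prod = ι k (x ⟨0, hn⟩) * η + ω * β :=
  stmt_2_general hn b x y hx hy ω hω
end

section
/- Let M = Λ(x_1, x_2, y_1, y_2, z, ω_1, ω_2) be the free graded-commutative algebra on seven degree-1 generators over a field k of characteristic zero, with differential d(x_i) = d(y_i) = d(z) = 0, d(ω_1) = x_1∧y_1 + x_2∧z, d(ω_2) = x_2∧y_2 + x_1∧z. Then every 2-cocycle w of M, written as w = u + a·ω_1∧ω_2 + (terms linear in the ω_i with coefficients in the span of x_1, x_2, y_1, y_2, z) with u ∈ Λ²(x_1, x_2, y_1, y_2, z), satisfies: dw = 0 implies that the ω_1∧ω_2 coefficient a is 0, and that the only cocycles involving the ω_i linearly are scalar multiples of x_1∧ω_1 + x_2∧ω_2 modulo cocycles in Λ²(x_1, x_2, y_1, y_2, z). -/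
set_option maxHeartbeats 1000000

open ExteriorAlgebra

noncomputable def phiN {k E1 : Type*} [Field k] [AddCommGroup E1] [Module k E1]
    (e : Module.Basis (Fin 5) k E1) (n : ℕ) (s : Fin n → Fin 5) : ExteriorAlgebra k E1 →ₗ[k] k :=
  ExteriorAlgebra.liftAlternating
    (Pi.single n ((Matrix.detRowAlternating).compLinearMap (LinearMap.pi fun j => e.coord (s j))))

lemma phiN_apply {k E1 : Type*} [Field k] [AddCommGroup E1] [Module k E1]
    (e : Module.Basis (Fin 5) k E1) (n : ℕ) (s : Fin n → Fin 5) (v : Fin n → E1) :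
    phiN e n s (ExteriorAlgebra.ιMulti k n v) =
      Matrix.det (Matrix.of fun i j => e.repr (v i) (s j)) := by
  rw [phiN, ExteriorAlgebra.liftAlternating_apply_ιMulti, Pi.single_eq_same]
  simp [Matrix.det, Module.Basis.coord_apply]
  rfl

/-- Let `M = Λ(x₁,x₂,y₁,y₂,z,ω₁,ω₂)` with `d(x_i)=d(y_i)=d(z)=0`,
`d(ω₁)=θ₁ := x₁∧y₁+x₂∧z`, `d(ω₂)=θ₂ := x₂∧y₂+x₁∧z`.  Writing a degree-2 element as
`w = u + v₁∧ω₁ + v₂∧ω₂ + a·ω₁∧ω₂` with `u ∈ Λ²(x_i,y_i,z)`, `v₁,v₂` degree-1 in the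
`x_i,y_i,z` and `a ∈ k`, one computes `dw = -(v₁∧θ₁ + v₂∧θ₂) - a·θ₂∧ω₁ + a·θ₁∧ω₂`
(and `du = 0`).  Hence `dw = 0` is equivalent to `v₁∧θ₁ + v₂∧θ₂ = 0`, `a•θ₁ = 0` and
`a•θ₂ = 0`; the claim is that then the `ω₁∧ω₂`-coefficient `a` vanishes and the part of
`w` linear in the `ω_i` is a scalar multiple of `x₁∧ω₁ + x₂∧ω₂`, i.e.
`(v₁, v₂) = (c•x₁, c•x₂)` — so, modulo cocycles `u ∈ Λ²(x_i,y_i,z)`, the only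
2-cocycles involving `ω₁, ω₂` are the scalar multiples of `x₁∧ω₁ + x₂∧ω₂`. -/
theorem stmt_13 {k E1 : Type*} [Field k] [CharZero k] [AddCommGroup E1] [Module k E1]
    (e : Module.Basis (Fin 5) k E1)
    (x₁ x₂ y₁ y₂ z : E1)
    (hx₁ : x₁ = e 0) (hx₂ : x₂ = e 1) (hy₁ : y₁ = e 2) (hy₂ : y₂ = e 3) (hz : z = e 4)
    (θ₁ θ₂ : ExteriorAlgebra k E1)
    (hθ₁ : θ₁ = ι k x₁ * ι k y₁ + ι k x₂ * ι k z)
    (hθ₂ : θ₂ = ι k x₂ * ι k y₂ + ι k x₁ * ι k z) :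
    ∀ (u : ExteriorAlgebra k E1),
      u ∈ (LinearMap.range (ι k : E1 →ₗ[k] ExteriorAlgebra k E1) ^ 2 :
        Submodule k (ExteriorAlgebra k E1)) →
    ∀ (v₁ v₂ : E1) (a : k),
      -- `dw = 0` for `w = u + v₁∧ω₁ + v₂∧ω₂ + a·ω₁∧ω₂`, componentwise:
      ι k v₁ * θ₁ + ι k v₂ * θ₂ = 0 → a • θ₁ = 0 → a • θ₂ = 0 →
      a = 0 ∧ ∃ c : k, v₁ = c • x₁ ∧ v₂ = c • x₂ := by
  subst hx₁ hx₂ hy₁ hy₂ hz hθ₁ hθ₂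
  intro u _hu v₁ v₂ a h ha1 _ha2
  -- rewrite the cocycle condition in terms of `ιMulti`
  have hE : ιMulti k 3 ![v₁, e 0, e 2] + ιMulti k 3 ![v₁, e 1, e 4]
      + (ιMulti k 3 ![v₂, e 1, e 3] + ιMulti k 3 ![v₂, e 0, e 4]) = 0 := by
    simp only [ιMulti_apply, List.ofFn_succ, List.ofFn_zero, List.prod_cons, List.prod_nil,
      Matrix.cons_val_zero, Matrix.cons_val_one, Matrix.head_cons, mul_one,
      Matrix.cons_val_succ, Fin.succ_zero_eq_one]
    rw [← mul_add, ← mul_add]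
    simpa only [mul_assoc] using h
  have key : ∀ s : Fin 3 → Fin 5,
      Matrix.det (Matrix.of fun i j => e.repr (![v₁, e 0, e 2] i) (s j))
      + Matrix.det (Matrix.of fun i j => e.repr (![v₁, e 1, e 4] i) (s j))
      + (Matrix.det (Matrix.of fun i j => e.repr (![v₂, e 1, e 3] i) (s j))
      + Matrix.det (Matrix.of fun i j => e.repr (![v₂, e 0, e 4] i) (s j))) = 0 := by
    intro s
    have := congrArg (phiN e 3 s) hE
    simpa only [map_add, map_zero, phiN_apply] using this
  have h012 := key ![0, 1, 2]
  have h013 := key ![0, 1, 3]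
  have h014 := key ![0, 1, 4]
  have h023 := key ![0, 2, 3]
  have h024 := key ![0, 2, 4]
  have h034 := key ![0, 3, 4]
  have h123 := key ![1, 2, 3]
  have h124 := key ![1, 2, 4]
  have h134 := key ![1, 3, 4]
  simp only [Matrix.det_fin_three, Matrix.of_apply, Matrix.cons_val', Matrix.cons_val_zero,
    Matrix.cons_val_one, Matrix.head_cons, Matrix.cons_val_two, Matrix.tail_cons,
    Matrix.head_fin_const, Matrix.empty_val', Matrix.cons_val_fin_one, Module.Basis.repr_self,
    Finsupp.single_apply] at h012 h013 h014 h023 h024 h034 h123 h124 h134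
  simp at h012 h013 h014 h023 h024 h034 h123 h124 h134
  -- a = 0 from a • θ₁ = 0
  have hTh : ιMulti k 2 ![e 0, e 2] + ιMulti k 2 ![e 1, e 4]
      = ι k (e 0) * ι k (e 2) + ι k (e 1) * ι k (e 4) := by
    simp [ιMulti_apply, List.ofFn_succ]
  have ha : a = 0 := by
    have h2 := congrArg (phiN e 2 ![0, 2]) ha1
    rw [← hTh] at h2
    rw [map_smul, show (phiN e 2 ![0, 2]) (0 : ExteriorAlgebra k E1) = 0 from map_zero _] at h2
    have hone : phiN e 2 ![0, 2] ((ιMulti k 2) ![e 0, e 2] + (ιMulti k 2) ![e 1, e 4]) = 1 := by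
      simp only [map_add, phiN_apply, Matrix.det_fin_two, Matrix.of_apply, Matrix.cons_val_zero,
        Matrix.cons_val_one, Matrix.head_cons, Module.Basis.repr_self, Finsupp.single_apply]
      simp
    rw [hone, smul_eq_mul, mul_one] at h2
    exact h2
  clear h hE key hTh ha1 _ha2 _hu
  have hb2 : e.repr v₂ 2 = 0 := h123
  have ha4 : e.repr v₁ 4 = 0 := by linear_combination h024 + h123
  have ha3 : e.repr v₁ 3 = 0 := h023
  have hb4 : e.repr v₂ 4 = 0 := by linear_combination h134 + h023
  have hb1 : e.repr v₂ 1 = e.repr v₁ 0 := by linear_combination -h014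
  refine ⟨ha, e.repr v₁ 0, ?_, ?_⟩
  · conv_lhs => rw [← e.sum_repr v₁]
    rw [Fin.sum_univ_five, h012, h124, ha3, ha4]
    simp
  · conv_lhs => rw [← e.sum_repr v₂]
    rw [Fin.sum_univ_five, h013, hb1, hb2, h034, hb4]
    simp
end

section
/- Let E = Λ(x_1, x_2, y_1, y_2, z) be the exterior algebra on five generators over a field k of characteristic zero, and set θ_1 = x_1∧y_1 + x_2∧z, θ_2 = x_2∧y_2 + x_1∧z. Suppose ξ, η ∈ E^1 with ξ ≠ 0 and η∧ξ = a·θ_1 + b·θ_2 for some a, b ∈ k. Then a = b = 0 and η is a scalar multiple of ξ. -/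
/-!
The 2 × 2 minors of a decomposable bivector `η ∧ ξ` satisfy the Plücker relations, the
coordinate form of `(η ∧ ξ)² = 0`. For `a • θ₁ + b • θ₂` the relations on the index sets
`{x₁, x₂, y₁, z}` and `{x₁, x₂, y₂, z}` read `a² = 0` and `b² = 0`. Once `η ∧ ξ = 0`, pairing
with a functional `g` such that `g ξ = 1` shows `η = g η • ξ`.
-/

open ExteriorAlgebra

namespace ExteriorAlgebra

variable {R M : Type*} [CommRing R] [AddCommGroup M] [Module R M]

noncomputable def minor (f g : Module.Dual R M) : ExteriorAlgebra R M →ₗ[R] R :=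
  liftAlternating <| Pi.single 2 <| Matrix.detRowAlternating.compLinearMap (LinearMap.pi ![f, g])

@[simp]
theorem minor_ι_mul_ι (f g : Module.Dual R M) (u v : M) :
    minor f g (ι R u * ι R v) = f u * g v - g u * f v := by
  rw [minor, liftAlternating_ι_mul, liftAlternating_ι]
  exact (Matrix.det_fin_two _).trans (by simp)

theorem minor_ι_mul_ι_plucker (f₁ f₂ f₃ f₄ : Module.Dual R M) (u v : M) :
    let ω := ι R u * ι R v
    minor f₁ f₂ ω * minor f₃ f₄ ω - minor f₁ f₃ ω * minor f₂ f₄ ω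
      + minor f₁ f₄ ω * minor f₂ f₃ ω = 0 := by
  simp only [minor_ι_mul_ι]
  ring

theorem exists_eq_smul_of_ι_mul_ι_eq_zero {K V : Type*} [Field K] [AddCommGroup V] [Module K V]
    {u v : V} (hv : v ≠ 0) (h : ι K u * ι K v = 0) : ∃ c : K, u = c • v := by
  obtain ⟨g, hg⟩ := Module.Projective.exists_dual_eq_one K hv
  refine ⟨g u, sub_eq_zero.mp <| (Module.forall_dual_apply_eq_zero_iff K _).mp fun f => ?_⟩
  have := congrArg (minor f g) h
  rw [minor_ι_mul_ι, hg, map_zero] at this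
  rw [map_sub, map_smul, smul_eq_mul]
  linear_combination this

end ExteriorAlgebra

theorem stmt_14_general {k E1 : Type*} [Field k] [AddCommGroup E1] [Module k E1]
    (e : Module.Basis (Fin 5) k E1)
    (x₁ x₂ y₁ y₂ z : E1)
    (hx₁ : x₁ = e 0) (hx₂ : x₂ = e 1) (hy₁ : y₁ = e 2) (hy₂ : y₂ = e 3) (hz : z = e 4)
    (θ₁ θ₂ : ExteriorAlgebra k E1)
    (hθ₁ : θ₁ = ι k x₁ * ι k y₁ + ι k x₂ * ι k z)
    (hθ₂ : θ₂ = ι k x₂ * ι k y₂ + ι k x₁ * ι k z)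
    (ξ η : E1) (hξ : ξ ≠ 0) (a b : k)
    (h : ι k η * ι k ξ = a • θ₁ + b • θ₂) :
    a = 0 ∧ b = 0 ∧ ∃ c : k, η = c • ξ := by
  subst hx₁ hx₂ hy₁ hy₂ hz hθ₁ hθ₂
  obtain ⟨rfl, rfl⟩ : a = 0 ∧ b = 0 := by
    have ha := minor_ι_mul_ι_plucker (e.coord 0) (e.coord 1) (e.coord 2) (e.coord 4) η ξ
    have hb := minor_ι_mul_ι_plucker (e.coord 0) (e.coord 1) (e.coord 3) (e.coord 4) η ξ
    simp [h, Module.Basis.coord_apply] at ha hb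
    exact ⟨ha, hb⟩
  exact ⟨rfl, rfl, exists_eq_smul_of_ι_mul_ι_eq_zero hξ (by simpa using h)⟩

/-- In `E = Λ(x₁,x₂,y₁,y₂,z)` with `θ₁ = x₁∧y₁ + x₂∧z`,
`θ₂ = x₂∧y₂ + x₁∧z`, if `ξ ≠ 0` and `η ∧ ξ = a•θ₁ + b•θ₂`, then `a = b = 0` and
`η` is a scalar multiple of `ξ`.  (Here `x₁,x₂,y₁,y₂,z` is a basis of the degree-1
part `E¹`, and `ξ, η ∈ E¹`.) -/
theorem stmt_14 {k E1 : Type*} [Field k] [CharZero k] [AddCommGroup E1] [Module k E1]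
    (e : Module.Basis (Fin 5) k E1)
    (x₁ x₂ y₁ y₂ z : E1)
    (hx₁ : x₁ = e 0) (hx₂ : x₂ = e 1) (hy₁ : y₁ = e 2) (hy₂ : y₂ = e 3) (hz : z = e 4)
    (θ₁ θ₂ : ExteriorAlgebra k E1)
    (hθ₁ : θ₁ = ι k x₁ * ι k y₁ + ι k x₂ * ι k z)
    (hθ₂ : θ₂ = ι k x₂ * ι k y₂ + ι k x₁ * ι k z)
    (ξ η : E1) (hξ : ξ ≠ 0) (a b : k)
    (h : ι k η * ι k ξ = a • θ₁ + b • θ₂) :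
    a = 0 ∧ b = 0 ∧ ∃ c : k, η = c • ξ :=
  stmt_14_general e x₁ x₂ y₁ y₂ z hx₁ hx₂ hy₁ hy₂ hz θ₁ θ₂ hθ₁ hθ₂ ξ η hξ a b h
end

section
/- Let V be a 2n-dimensional vector space over a field k of characteristic zero with basis x_1,y_1,...,x_n,y_n and ω = Σ x_i∧y_i. Then the quotient Λ^n V / (ω ∧ Λ^{n-2}V) is nonzero; in particular the image of y_1∧...∧y_n is nonzero in this quotient, i.e., y_1∧...∧y_n ∉ ω∧Λ^{n-2}V. -/
/-!
Let `g : V → V` kill the `xᵢ` and fix the `yᵢ`. The induced algebra endomorphism of `Λ V`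
kills `ω`, hence all of `ω ∧ Λ V`, but fixes `y₁ ∧ … ∧ yₙ`, which is nonzero because the `yᵢ`
are linearly independent.
-/

open ExteriorAlgebra

theorem ExteriorAlgebra.ιMulti_ne_zero_of_linearIndependent_s19 {K E : Type*} [Field K]
    [AddCommGroup E] [Module K E] {n : ℕ} {v : Fin n → E} (hv : LinearIndependent K v) :
    ιMulti K n v ≠ 0 := by
  have h := (exteriorPower.ιMulti_family_linearIndependent_field (n := n) hv).ne_zero
    (Set.powersetCard.ofFinEmbEquiv (OrderIso.refl (Fin n)).toOrderEmbedding)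
  contrapose! h
  rw [exteriorPower.ιMulti_family, Equiv.symm_apply_apply]
  exact Subtype.ext h

theorem AlgHom.notMem_map_mulLeft_of_map_eq_zero {R A B : Type*} [CommSemiring R]
    [Semiring A] [Semiring B] [Algebra R A] [Algebra R B] (φ : A →ₐ[R] B) {ω z : A}
    (hω : φ ω = 0) (hz : φ z ≠ 0) (p : Submodule R A) :
    z ∉ p.map (LinearMap.mulLeft R ω) := by
  rintro ⟨a, -, rfl⟩
  exact hz (by rw [LinearMap.mulLeft_apply, map_mul, hω, zero_mul])

theorem stmt_19_general {k V : Type*} [Field k] [AddCommGroup V] [Module k V]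
    {n : ℕ} (b : Module.Basis (Fin n ⊕ Fin n) k V)
    (x y : Fin n → V)
    (hx : ∀ i, x i = b (Sum.inl i)) (hy : ∀ i, y i = b (Sum.inr i))
    (ω : ExteriorAlgebra k V)
    (hω : ω = ∑ i : Fin n, ι k (x i) * ι k (y i)) :
    (List.ofFn fun i : Fin n => ι k (y i)).prod ∉
      Submodule.map (LinearMap.mulLeft k ω)
        (LinearMap.range (ι k : V →ₗ[k] ExteriorAlgebra k V) ^ (n - 2) :
          Submodule k (ExteriorAlgebra k V)) := by
  let g : V →ₗ[k] V := b.constr k (Sum.elim 0 (b ∘ Sum.inr))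
  have hgx (i : Fin n) : g (x i) = 0 := by simp [g, hx]
  have hgy : g ∘ y = y := funext fun i => by simp [g, hy]
  have hy_indep : LinearIndependent k y := by
    rw [show y = b ∘ Sum.inr from funext hy]
    exact b.linearIndependent.comp _ Sum.inr_injective
  rw [← ιMulti_apply]
  refine (ExteriorAlgebra.map g).notMem_map_mulLeft_of_map_eq_zero ?_ ?_ _
  · simp [hω, hgx]
  · rw [map_apply_ιMulti, hgy]
    exact ιMulti_ne_zero_of_linearIndependent_s19 hy_indep

/-- `y₁ ∧ … ∧ yₙ ∉ ω ∧ Λ^{n-2} V`, where `ω = Σ xᵢ ∧ yᵢ`; in particular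
the quotient `Λⁿ V / (ω ∧ Λ^{n-2} V)` is nonzero (so `Hⁿ(H_n) ≠ 0`). -/
theorem stmt_19 {k V : Type*} [Field k] [CharZero k] [AddCommGroup V] [Module k V]
    {n : ℕ} (hn : 0 < n) (b : Module.Basis (Fin n ⊕ Fin n) k V)
    (x y : Fin n → V)
    (hx : ∀ i, x i = b (Sum.inl i)) (hy : ∀ i, y i = b (Sum.inr i))
    (ω : ExteriorAlgebra k V)
    (hω : ω = ∑ i : Fin n, ι k (x i) * ι k (y i)) :
    (List.ofFn fun i : Fin n => ι k (y i)).prod ∉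
      Submodule.map (LinearMap.mulLeft k ω)
        (LinearMap.range (ι k : V →ₗ[k] ExteriorAlgebra k V) ^ (n - 2) :
          Submodule k (ExteriorAlgebra k V)) :=
  stmt_19_general b x y hx hy ω hω
end
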